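/- arXiv:1406.2755 — 2 statements merged into one kernel-verified Lean document; each statement's English description precedes it below -/
import Mathlib

section
/- For every natural number n and every real number x, the tribonacci polynomial satisfies T_{n+1}(x) = ∑_{λ} x^{2δ(λ)+ν(λ)}, where the sum is over all tilings λ of length n. -/
/-- The tribonacci polynomials: `T 0 x = 0`, `T 1 x = 1`, `T 2 x = x^2`,
`T (n+3) x = x^2 * T (n+2) x + x * T (n+1) x + T n x`. -/
def tribPoly : ℕ → ℝ → ℝ
  | 0, _ => 0
  | 1, _ => 1
  | 2, x => x ^ 2
  | (n + 3), x => x ^ 2 * tribPoly (n + 2) x + x * tribPoly (n + 1) x + tribPoly n x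


open Finset


def tilings : ℕ → Finset (List ℕ)
  | 0 => {[]}
  | 1 => {[1]}
  | 2 => {[1,1], [2]}
  | (n+3) => ((tilings (n+2)).image (List.cons 1) ∪ (tilings (n+1)).image (List.cons 2))
      ∪ (tilings n).image (List.cons 3)

lemma eq_nil_of_sum_zero (l : List ℕ) (hs : l.sum = 0)
    (hb : ∀ b ∈ l, b = 1 ∨ b = 2 ∨ b = 3) : l = [] := by
  cases l with
  | nil => rfl
  | cons a t => rcases hb a (by simp) with rfl | rfl | rfl <;> simp at hs

lemma eq_single_of_sum_one (l : List ℕ) (hs : l.sum = 1)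
    (hb : ∀ b ∈ l, b = 1 ∨ b = 2 ∨ b = 3) : l = [1] := by
  cases l with
  | nil => simp at hs
  | cons a t =>
    rcases hb a (by simp) with rfl | rfl | rfl <;> simp at hs <;> try omega
    rw [eq_nil_of_sum_zero t hs (fun b hbm => hb b (by simp [hbm]))]

lemma mem_tilings : ∀ (n : ℕ) (l : List ℕ),
    l ∈ tilings n ↔ l.sum = n ∧ ∀ b ∈ l, b = 1 ∨ b = 2 ∨ b = 3 := by
  intro n
  induction n using Nat.strong_induction_on with
  | _ n ih =>
    match n with
    | 0 =>
      intro l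
      simp only [tilings, mem_singleton]
      constructor
      · rintro rfl; simp
      · rintro ⟨hs, hb⟩; exact eq_nil_of_sum_zero l hs hb
    | 1 =>
      intro l
      simp only [tilings, mem_singleton]
      constructor
      · rintro rfl; simp
      · rintro ⟨hs, hb⟩; exact eq_single_of_sum_one l hs hb
    | 2 =>
      intro l
      simp only [tilings, mem_insert, mem_singleton]
      constructor
      · rintro (rfl | rfl) <;> simp
      · rintro ⟨hs, hb⟩
        cases l with
        | nil => simp at hs
        | cons a t =>
          have hb' : ∀ b ∈ t, b = 1 ∨ b = 2 ∨ b = 3 := fun b hbm => hb b (by simp [hbm])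
          simp only [List.sum_cons] at hs
          rcases hb a (by simp) with rfl | rfl | rfl
          · exact Or.inl (by rw [eq_single_of_sum_one t (by omega) hb'])
          · exact Or.inr (by rw [eq_nil_of_sum_zero t (by omega) hb'])
          · omega
    | (m+3) =>
      intro l
      simp only [tilings, mem_union, mem_image]
      constructor
      · rintro ((⟨t, ht, rfl⟩ | ⟨t, ht, rfl⟩) | ⟨t, ht, rfl⟩) <;>
          rcases (ih _ (by omega) t).1 ht with ⟨hs, hb⟩ <;>
          constructor <;> simp_all <;> omega
      · rintro ⟨hs, hb⟩
        cases l with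
        | nil => simp at hs
        | cons a t =>
          have hb' : ∀ b ∈ t, b = 1 ∨ b = 2 ∨ b = 3 := fun b hbm => hb b (by simp [hbm])
          simp only [List.sum_cons] at hs
          rcases hb a (by simp) with rfl | rfl | rfl
          · exact Or.inl <| Or.inl ⟨t, (ih (m+2) (by omega) t).2 ⟨by omega, hb'⟩, rfl⟩
          · exact Or.inl <| Or.inr ⟨t, (ih (m+1) (by omega) t).2 ⟨by omega, hb'⟩, rfl⟩
          · exact Or.inr ⟨t, (ih m (by omega) t).2 ⟨by omega, hb'⟩, rfl⟩

noncomputable def wsum (x : ℝ) (n : ℕ) : ℝ :=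
  ∑ l ∈ tilings n, x ^ (2 * l.count 1 + l.count 2)

lemma wsum_zero (x : ℝ) : wsum x 0 = 1 := by simp [wsum, tilings]

lemma wsum_one (x : ℝ) : wsum x 1 = x ^ 2 := by simp [wsum, tilings]

lemma wsum_two (x : ℝ) : wsum x 2 = x ^ 4 + x := by
  rw [wsum, tilings]
  rw [Finset.sum_pair (by simp)]
  norm_num [List.count_cons]

lemma sum_image_cons (x : ℝ) (k : ℕ) (s : Finset (List ℕ)) :
    ∑ l ∈ s.image (List.cons k), x ^ (2 * l.count 1 + l.count 2)
      = ∑ l ∈ s, x ^ (2 * (k :: l).count 1 + (k :: l).count 2) := by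
  rw [Finset.sum_image]
  intro a _ b _ h
  exact (List.cons_injective h)

lemma wsum_rec (x : ℝ) (n : ℕ) :
    wsum x (n+3) = x ^ 2 * wsum x (n+2) + x * wsum x (n+1) + wsum x n := by
  have hd : ∀ (k j : ℕ) (s t : Finset (List ℕ)), k ≠ j →
      Disjoint (s.image (List.cons k)) (t.image (List.cons j)) := by
    intro k j s t hkj
    simp only [Finset.disjoint_left, mem_image]
    rintro a ⟨u, _, rfl⟩ ⟨v, _, h⟩
    exact hkj (List.head_eq_of_cons_eq h.symm)
  have h1 : ∑ l ∈ tilings (n+2), x ^ (2 * (1 :: l).count 1 + (1 :: l).count 2)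
      = x ^ 2 * wsum x (n+2) := by
    rw [wsum, Finset.mul_sum]
    refine Finset.sum_congr rfl fun l _ => ?_
    simp [List.count_cons]
    ring
  have h2 : ∑ l ∈ tilings (n+1), x ^ (2 * (2 :: l).count 1 + (2 :: l).count 2)
      = x * wsum x (n+1) := by
    rw [wsum, Finset.mul_sum]
    refine Finset.sum_congr rfl fun l _ => ?_
    simp [List.count_cons]
    ring
  have h3 : ∑ l ∈ tilings n, x ^ (2 * (3 :: l).count 1 + (3 :: l).count 2)
      = wsum x n := by
    rw [wsum]
    refine Finset.sum_congr rfl fun l _ => ?_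
    simp [List.count_cons]
  rw [wsum, tilings, Finset.sum_union, Finset.sum_union (hd 1 2 _ _ (by norm_num)),
    sum_image_cons, sum_image_cons, sum_image_cons, h1, h2, h3]
  apply Finset.disjoint_union_left.2
  exact ⟨hd 1 3 _ _ (by norm_num), hd 2 3 _ _ (by norm_num)⟩

lemma tribPoly_eq_wsum (x : ℝ) : ∀ n, tribPoly (n+1) x = wsum x n := by
  intro n
  induction n using Nat.strong_induction_on with
  | _ n ih =>
    match n with
    | 0 => simp [tribPoly, wsum_zero]
    | 1 => simp [tribPoly, wsum_one]
    | 2 => simp [tribPoly, wsum_two]; ring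
    | (m+3) =>
      show tribPoly (m+1+3) x = _
      rw [tribPoly, wsum_rec, ih (m+2) (by omega), ih (m+1) (by omega), ih m (by omega)]

lemma wsum_eq_comp_sum (x : ℝ) (n : ℕ) :
    wsum x n = ∑ c ∈ Finset.univ.filter (fun c : Composition n => ∀ b ∈ c.blocks, b ≤ 3),
        x ^ (2 * c.blocks.count 1 + c.blocks.count 2) := by
  rw [wsum]
  refine Finset.sum_bij' (i := fun l hl => (⟨l, ?_, ?_⟩ : Composition n))
    (j := fun c _ => c.blocks) ?_ ?_ ?_ ?_ ?_
  · intro i hi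
    rcases ((mem_tilings n l).1 hl).2 i hi with rfl | rfl | rfl <;> norm_num
  · exact ((mem_tilings n l).1 hl).1
  · intro l hl
    simp only [Finset.mem_filter, Finset.mem_univ, true_and]
    intro b hb
    rcases ((mem_tilings n l).1 hl).2 b hb with rfl | rfl | rfl <;> norm_num
  · intro c hc
    simp only [Finset.mem_filter, Finset.mem_univ, true_and] at hc
    refine (mem_tilings n c.blocks).2 ⟨c.blocks_sum, fun b hb => ?_⟩
    have h1 := c.blocks_pos hb
    have h3 := hc b hb
    omega
  · intro l hl; rfl
  · intro c hc; rfl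
  · intro l hl; rfl


/-- A tiling of length `n` is a composition of `n` all of whose parts are at most `3`
(so parts lie in `{1,2,3}`: squares, dominos, trominos).  `T_{n+1}(x)` is the total
weight `x^(2δ(λ)+ν(λ))` over all tilings `λ` of length `n`, where `δ` counts squares
and `ν` counts dominos. -/
theorem tribPoly_eq_sum_tilings (n : ℕ) (x : ℝ) :
    tribPoly (n + 1) x =
      ∑ c ∈ Finset.univ.filter (fun c : Composition n => ∀ b ∈ c.blocks, b ≤ 3),
        x ^ (2 * c.blocks.count 1 + c.blocks.count 2) := by
  rw [tribPoly_eq_wsum, wsum_eq_comp_sum]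
end

section
/- For all natural numbers n and s with n ≥ 2s+1 and every real number x, T_{n+1}^{(s)}(x) = ∑_{i=0}^{s} ( x^{i+2} T_{n-2i}^{(s-i)}(x) + x^{i} T_{n-2i-2}^{(s-i-1)}(x) ), where T_m^{(-1)}(x) is interpreted as 0 (so the second summand vanishes when i = s). -/
/-- The incomplete tribonacci polynomial `T_n^{(s)}(x)`, for subscript `n ≥ 1`:
`T_{n+1}^{(s)}(x) = ∑_{i=0}^{s} ∑_{j=0}^{i} C(i,j) C(n-i-j, i) x^{2n-3(i+j)}`. -/
def incTrib (n s : ℕ) (x : ℝ) : ℝ :=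
  ∑ i ∈ Finset.range (s + 1), ∑ j ∈ Finset.range (i + 1),
    (Nat.choose i j : ℝ) * (Nat.choose (n - 1 - i - j) i : ℝ) * x ^ (2 * (n - 1) - 3 * (i + j))

/-- The incomplete tribonacci polynomial allowing an integer superscript,
with the convention `T_n^{(s)}(x) = 0` for `s < 0`. -/
def incTribZ (n : ℕ) (s : ℤ) (x : ℝ) : ℝ :=
  if 0 ≤ s then incTrib n s.toNat x else 0

open Finset

lemma incTrib_rec (n s : ℕ) (x : ℝ) (h : 2 * s + 3 ≤ n) :
    incTrib (n + 1) (s + 1) x =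
      x ^ 2 * incTrib n (s + 1) x + x * incTrib (n - 1) s x + incTrib (n - 2) s x := by
  have h1 : x ^ 2 * incTrib n (s + 1) x
      = x ^ (2 * n)
        + ∑ i ∈ range (s + 1), ∑ j ∈ range (i + 1 + 1),
            ((i + 1).choose j : ℝ) * ((n - 2 - i - j).choose (i + 1) : ℝ)
              * x ^ (2 * n - 3 * (i + 1 + j)) := by
    rw [incTrib, sum_range_succ']
    rw [mul_add, add_comm]
    congr 1
    · rw [sum_range_one]
      simp only [Nat.choose_zero_right, Nat.cast_one, one_mul, mul_zero, Nat.sub_zero]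
      rw [← pow_add]
      congr 1
      omega
    · rw [mul_sum]
      refine sum_congr rfl fun i hi => ?_
      rw [mul_sum]
      refine sum_congr rfl fun j hj => ?_
      simp only [mem_range] at hi hj
      have e1 : n - 1 - (i + 1) - j = n - 2 - i - j := by omega
      rw [e1]
      by_cases hc : (n - 2 - i - j).choose (i + 1) = 0
      · simp [hc]
      · have hc' : ¬ (n - 2 - i - j < i + 1) := fun hlt => hc (Nat.choose_eq_zero_of_lt hlt)
        have he : 2 + (2 * (n - 1) - 3 * (i + 1 + j)) = 2 * n - 3 * (i + 1 + j) := by omega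
        rw [← he, pow_add]
        ring
  have step1 : incTrib (n + 1) (s + 1) x
      = x ^ (2 * n)
        + (∑ i ∈ range (s + 1), ∑ j ∈ range (i + 1 + 1),
            ((i + 1).choose j : ℝ) * ((n - 2 - i - j).choose (i + 1) : ℝ)
              * x ^ (2 * n - 3 * (i + 1 + j)))
        + ∑ i ∈ range (s + 1), ∑ j ∈ range (i + 1 + 1),
            ((i + 1).choose j : ℝ) * ((n - 2 - i - j).choose i : ℝ)
              * x ^ (2 * n - 3 * (i + 1 + j)) := by
    rw [incTrib, sum_range_succ', add_comm, add_assoc]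
    congr 1
    · rw [sum_range_one]
      simp only [Nat.choose_zero_right, Nat.cast_one, one_mul, Nat.add_sub_cancel,
        Nat.sub_zero, Nat.add_zero, Nat.mul_zero]
    · rw [← sum_add_distrib]
      refine sum_congr rfl fun i hi => ?_
      rw [← sum_add_distrib]
      refine sum_congr rfl fun j hj => ?_
      simp only [mem_range] at hi hj
      simp only [Nat.add_sub_cancel]
      rw [show n - (i + 1) - j = (n - 2 - i - j) + 1 from by omega, Nat.choose_succ_succ]
      push_cast
      ring
  have h2 : (∑ i ∈ range (s + 1), ∑ j ∈ range (i + 1 + 1),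
        ((i + 1).choose j : ℝ) * ((n - 2 - i - j).choose i : ℝ)
          * x ^ (2 * n - 3 * (i + 1 + j)))
      = x * incTrib (n - 1) s x + incTrib (n - 2) s x := by
    rw [incTrib, incTrib, mul_sum, ← sum_add_distrib]
    refine sum_congr rfl fun i hi => ?_
    simp only [mem_range] at hi
    rw [sum_range_succ' _ (i + 1)]
    have hsplit : ∀ j ∈ range (i + 1),
        (((i + 1).choose (j + 1) : ℝ)) * ((n - 2 - i - (j + 1)).choose i : ℝ)
            * x ^ (2 * n - 3 * (i + 1 + (j + 1)))
        = (i.choose j : ℝ) * ((n - 2 - i - (j + 1)).choose i : ℝ)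
            * x ^ (2 * n - 3 * (i + 1 + (j + 1)))
          + (i.choose (j + 1) : ℝ) * ((n - 2 - i - (j + 1)).choose i : ℝ)
            * x ^ (2 * n - 3 * (i + 1 + (j + 1))) := by
      intro j hj
      rw [Nat.choose_succ_succ]
      push_cast
      ring
    rw [sum_congr rfl hsplit, sum_add_distrib]
    have hX : ∑ j ∈ range (i + 1), (i.choose j : ℝ) * ((n - 2 - i - (j + 1)).choose i : ℝ)
            * x ^ (2 * n - 3 * (i + 1 + (j + 1)))
        = ∑ j ∈ range (i + 1), (i.choose j : ℝ) * ((n - 2 - 1 - i - j).choose i : ℝ)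
            * x ^ (2 * (n - 2 - 1) - 3 * (i + j)) := by
      refine sum_congr rfl fun j hj => ?_
      simp only [mem_range] at hj
      rw [show n - 2 - i - (j + 1) = n - 2 - 1 - i - j from by omega]
      by_cases hc : (n - 2 - 1 - i - j).choose i = 0
      · simp [hc]
      · have hc' : ¬ (n - 2 - 1 - i - j < i) := fun hlt => hc (Nat.choose_eq_zero_of_lt hlt)
        rw [show 2 * n - 3 * (i + 1 + (j + 1)) = 2 * (n - 2 - 1) - 3 * (i + j) from by omega]
    have hY : (∑ j ∈ range (i + 1), (i.choose (j + 1) : ℝ) * ((n - 2 - i - (j + 1)).choose i : ℝ)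
            * x ^ (2 * n - 3 * (i + 1 + (j + 1))))
          + ((i + 1).choose 0 : ℝ) * ((n - 2 - i - 0).choose i : ℝ) * x ^ (2 * n - 3 * (i + 1 + 0))
        = x * ∑ j ∈ range (i + 1), (i.choose j : ℝ) * ((n - 1 - 1 - i - j).choose i : ℝ)
            * x ^ (2 * (n - 1 - 1) - 3 * (i + j)) := by
      conv_rhs => rw [sum_range_succ' _ i, mul_add, mul_sum]
      rw [sum_range_succ _ i]
      simp only [Nat.choose_succ_self, Nat.cast_zero, zero_mul, add_zero]
      congr 1
      · refine sum_congr rfl fun j hj => ?_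
        simp only [mem_range] at hj
        rw [show n - 1 - 1 - i - (j + 1) = n - 2 - i - (j + 1) from by omega]
        by_cases hc : (n - 2 - i - (j + 1)).choose i = 0
        · simp [hc]
        · by_cases hj2 : i.choose (j + 1) = 0
          · simp [hj2]
          · have hc' : ¬ (n - 2 - i - (j + 1) < i) := fun hlt => hc (Nat.choose_eq_zero_of_lt hlt)
            have hj' : ¬ (i < j + 1) := fun hlt => hj2 (Nat.choose_eq_zero_of_lt hlt)
            rw [show 2 * n - 3 * (i + 1 + (j + 1))
                  = (2 * (n - 1 - 1) - 3 * (i + (j + 1))) + 1 from by omega, pow_succ]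
            ring
      · simp only [Nat.choose_zero_right, Nat.cast_one, one_mul, Nat.sub_zero, Nat.add_zero]
        rw [show n - 1 - 1 - i = n - 2 - i from by omega]
        by_cases hc : (n - 2 - i).choose i = 0
        · simp [hc]
        · have hc' : ¬ (n - 2 - i < i) := fun hlt => hc (Nat.choose_eq_zero_of_lt hlt)
          rw [show 2 * n - 3 * (i + 1) = (2 * (n - 1 - 1) - 3 * i) + 1 from by omega, pow_succ]
          ring
    linear_combination hX + hY
  rw [step1, h2, ← h1]
  ring


/-- For `n ≥ 2s+1`:
`T_{n+1}^{(s)}(x) = ∑_{i=0}^{s} (x^{i+2} T_{n-2i}^{(s-i)}(x) + x^{i} T_{n-2i-2}^{(s-i-1)}(x))`,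
where `T_m^{(-1)}(x) = 0` (so the second summand vanishes when `i = s`). -/
theorem incTrib_identity4 (n s : ℕ) (hn : 2 * s + 1 ≤ n) (x : ℝ) :
    incTrib (n + 1) s x =
      ∑ i ∈ Finset.range (s + 1),
        (x ^ (i + 2) * incTrib (n - 2 * i) (s - i) x +
          x ^ i * incTribZ (n - 2 * i - 2) ((s : ℤ) - i - 1) x) := by
  induction s generalizing n with
  | zero =>
    rw [sum_range_one]
    have hz : incTribZ (n - 2 * 0 - 2) (((0 : ℕ) : ℤ) - (0 : ℕ) - 1) x = 0 := by
      rw [incTribZ, if_neg]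
      norm_num
    rw [hz]
    rw [incTrib, incTrib]
    simp only [zero_add, add_zero, mul_zero, sum_range_one, Nat.choose_zero_right,
      Nat.choose_self, Nat.cast_one, one_mul, Nat.sub_zero, Nat.add_zero, Nat.mul_zero,
      Nat.add_sub_cancel, Nat.sub_self, pow_zero]
    rw [← pow_add]
    congr 1
    omega
  | succ s IH =>
    have hrec := incTrib_rec n s x (by omega)
    rw [sum_range_succ']
    have hshift : ∀ i ∈ range (s + 1),
        (x ^ (i + 1 + 2) * incTrib (n - 2 * (i + 1)) (s + 1 - (i + 1)) x
          + x ^ (i + 1) * incTribZ (n - 2 * (i + 1) - 2) (((s + 1 : ℕ) : ℤ) - (i + 1 : ℕ) - 1) x)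
        = x * (x ^ (i + 2) * incTrib ((n - 2) - 2 * i) (s - i) x
          + x ^ i * incTribZ ((n - 2) - 2 * i - 2) ((s : ℤ) - i - 1) x) := by
      intro i hi
      rw [show n - 2 * (i + 1) = (n - 2) - 2 * i from by omega,
          show s + 1 - (i + 1) = s - i from by omega,
          show ((s + 1 : ℕ) : ℤ) - (i + 1 : ℕ) - 1 = (s : ℤ) - i - 1 from by push_cast; ring]
      ring
    rw [sum_congr rfl hshift, ← mul_sum, ← IH (n - 2) (by omega),
        show n - 2 + 1 = n - 1 from by omega]
    have hz : incTribZ (n - 2 * 0 - 2) (((s + 1 : ℕ) : ℤ) - (0 : ℕ) - 1) x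
        = incTrib (n - 2) s x := by
      rw [show (((s + 1 : ℕ) : ℤ) - (0 : ℕ) - 1) = ((s : ℕ) : ℤ) from by push_cast; ring]
      rw [incTribZ, if_pos (Int.natCast_nonneg s), Int.toNat_natCast]
      norm_num
    rw [hz, show n - 2 * 0 = n from by omega, show s + 1 - 0 = s + 1 from rfl]
    rw [hrec]
    ring
end
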